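/- (Deterministic version of the sufficient condition for global decomposability) Let Y : [0,∞) → GL(n,ℝ) solve dY_t/dt = A(t) Y_t with Y_0 = I_n, A continuous. Suppose that for all t ≥ 0, all i ∈ {n-k+1,…,n}, and all increasing index sets (l₁ < … < l_k) ≠ (n-k+1,…,n): det^{n-k+1,…,n}_{l₁…l_k}([I : A(t) : i]) · det^{l₁…l_k}_{n-k+1,…,n}(Y_t) = 0. Then det^{n-k+1,…,n}_{n-k+1,…,n}(Y_t) solves the scalar linear ODE u' = c(t)·u with c(t) = Σ_{i=n-k+1}^n det^{n-k+1,…,n}_{n-k+1,…,n}([I : A(t) : i]) and u(0) = 1, and in particular det^{n-k+1,…,n}_{n-k+1,…,n}(Y_t) > 0 for all t ≥ 0. -/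

import Mathlib

/-!
Differentiating the Leibniz formula, the derivative of `u = det (Y_{KK})`, `K` the last `k`
indices, is `∑_i det` of `Y_{KK}` with row `i` replaced by row `i` of `(A Y)_{K·}`, and that
matrix is `[I : A : i]_{K·} Y_{·K}`. Cauchy–Binet expands each of these determinants over
increasing `l`; the hypothesis kills every term with `l ≠ K`, leaving `u' = c u`. The
integrating factor `exp (-∫₀ᵗ c)` then gives `u t = exp (∫₀ᵗ c) > 0`.
-/

open Finset Matrix

namespace Matrix

theorem hasDerivAt_det {𝕜 n : Type*} [NontriviallyNormedField 𝕜] [Fintype n] [DecidableEq n]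
    {N : 𝕜 → Matrix n n 𝕜} {N' : Matrix n n 𝕜} {t : 𝕜}
    (h : ∀ i j, HasDerivAt (fun s => N s i j) (N' i j) t) :
    HasDerivAt (fun s => (N s).det) (∑ p, ((N t).updateRow p (N' p)).det) t := by
  simp_rw [det_apply']
  refine (HasDerivAt.fun_sum fun σ _ =>
    (HasDerivAt.fun_finsetProd fun i _ => h (σ i) i).const_mul _).congr_deriv ?_
  rw [sum_comm]
  refine sum_congr rfl fun σ _ => ?_
  rw [mul_sum]
  refine Fintype.sum_equiv σ _ _ fun j => ?_
  rw [← mul_prod_erase univ _ (mem_univ j), updateRow_self, smul_eq_mul, mul_comm (N' _ _)]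
  congr 2
  refine prod_congr rfl fun i hi => ?_
  rw [updateRow_ne (σ.injective.ne (ne_of_mem_erase hi))]

theorem submatrix_updateRow_of_injective {l m n o α : Type*} [DecidableEq l] [DecidableEq m]
    (M : Matrix m n α) {e : l → m} (he : Function.Injective e) (f : o → n) (i : l) (r : n → α) :
    (M.updateRow (e i) r).submatrix e f = (M.submatrix e f).updateRow i (r ∘ f) := by
  ext a b
  obtain rfl | hai := eq_or_ne a i
  · simp
  · simp [updateRow_ne hai, updateRow_ne (he.ne hai)]

theorem updateRow_one_mul {n α : Type*} [Fintype n] [DecidableEq n] [NonAssocSemiring α]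
    (A Y : Matrix n n α) (i : n) :
    (1 : Matrix n n α).updateRow i (A i) * Y = Y.updateRow i ((A * Y) i) := by
  rw [updateRow_mul, one_mul]
  rfl

variable {R : Type*} [CommRing R]

theorem det_mul_eq_sum_prod_mul_det_submatrix {m ι : Type*} [Fintype m] [DecidableEq m]
    [Fintype ι] [DecidableEq ι] (M : Matrix m ι R) (N : Matrix ι m R) :
    (M * N).det = ∑ f : m → ι, (∏ i, M i (f i)) * (N.submatrix f id).det := by
  have hrows : M * N = of fun i => ∑ j, M i j • N j := by
    ext i c; simp [mul_apply]
  let D := (detRowAlternating : (m → R) [⋀^m]→ₗ[R] R).toMultilinearMap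
  rw [hrows, det]
  exact (D.map_sum _).trans (sum_congr rfl fun f _ => D.map_smul_univ _ _)

open Classical in
theorem det_mul_eq_sum_strictMono {k : ℕ} {ι : Type*} [Fintype ι] [LinearOrder ι]
    (M : Matrix (Fin k) ι R) (N : Matrix ι (Fin k) R) :
    (M * N).det = ∑ l ∈ univ.filter (fun l : Fin k → ι => StrictMono l),
      (M.submatrix id l).det * (N.submatrix l id).det := by
  have hperm : ∀ l : Fin k → ι, (M.submatrix id l).det * (N.submatrix l id).det =
      ∑ σ : Equiv.Perm (Fin k), (∏ i, M i (l (σ i))) * (N.submatrix (l ∘ σ) id).det := by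
    intro l
    simp_rw [show ∀ σ : Equiv.Perm (Fin k), N.submatrix (l ∘ σ) id =
      (N.submatrix l id).submatrix σ id from fun _ => rfl, det_permute,
      ← det_transpose (M.submatrix id l), det_apply', sum_mul]
    refine sum_congr rfl fun σ _ => ?_
    simp only [transpose_apply, submatrix_apply, id_eq]
    ring
  simp_rw [det_mul_eq_sum_prod_mul_det_submatrix, hperm, sum_sigma']
  symm
  -- every injective `f` factors uniquely as `l ∘ σ` with `l` increasing (`l = f ∘ Tuple.sort f`)
  refine sum_bij_ne_zero (fun x _ _ => x.1 ∘ x.2) (fun _ _ _ => mem_univ _) ?_ ?_ ?_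
  · rintro ⟨l₁, σ₁⟩ h₁ - ⟨l₂, σ₂⟩ h₂ - heq
    simp only [mem_sigma, mem_filter, mem_univ, true_and, and_true] at h₁ h₂ heq
    obtain rfl : l₁ = l₂ :=
      (h₁.range_inj h₂).mp (by simpa only [EquivLike.range_comp] using congrArg Set.range heq)
    obtain rfl : σ₁ = σ₂ := DFunLike.coe_injective (h₁.injective.comp_left heq)
    rfl
  · intro f _ hf
    have hinj : Function.Injective f := by
      by_contra hni
      obtain ⟨i, j, hij, hne⟩ : ∃ i j, f i = f j ∧ i ≠ j := by
        simpa [Function.Injective] using hni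
      exact hf (by rw [det_zero_of_row_eq hne (by ext c; simp [hij]), mul_zero])
    refine ⟨⟨f ∘ Tuple.sort f, (Tuple.sort f).symm⟩, ?_, ?_, ?_⟩
    · simpa using
        (Tuple.monotone_sort f).strictMono_of_injective (hinj.comp (Tuple.sort f).injective)
    · simpa [Function.comp_def] using hf
    · ext i; simp
  · intros; rfl

end Matrix

section Decomposability

variable {𝕜 ι : Type*} [NontriviallyNormedField 𝕜] [Fintype ι] [LinearOrder ι] {k : ℕ}

open Classical in
theorem hasDerivAt_det_submatrix_eq_sum {Y : 𝕜 → Matrix ι ι 𝕜} {A : Matrix ι ι 𝕜} {t : 𝕜}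
    (hY : HasDerivAt Y (A * Y t) t) {e : Fin k → ι} (he : Function.Injective e) :
    HasDerivAt (fun s => ((Y s).submatrix e e).det)
      (∑ p, ∑ l ∈ univ.filter (fun l : Fin k → ι => StrictMono l),
        (((1 : Matrix ι ι 𝕜).updateRow (e p) (A (e p))).submatrix e l).det *
          ((Y t).submatrix l e).det) t := by
  have hentry : ∀ i j, HasDerivAt (fun s => (Y s).submatrix e e i j)
      ((A * Y t).submatrix e e i j) t := fun i j =>
    hasDerivAt_pi.mp (hasDerivAt_pi.mp hY (e i)) (e j)
  refine (hasDerivAt_det hentry).congr_deriv (sum_congr rfl fun p _ => ?_)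
  have hfactor : ((Y t).submatrix e e).updateRow p ((A * Y t).submatrix e e p) =
      ((1 : Matrix ι ι 𝕜).updateRow (e p) (A (e p))).submatrix e id * (Y t).submatrix id e := by
    rw [← submatrix_mul _ _ _ _ _ Function.bijective_id, updateRow_one_mul,
      submatrix_updateRow_of_injective _ he]
    rfl
  rw [hfactor, det_mul_eq_sum_strictMono]
  simp only [submatrix_submatrix, Function.comp_id, Function.id_comp]

theorem hasDerivAt_det_submatrix_of_cross_terms_eq_zero {Y : 𝕜 → Matrix ι ι 𝕜}
    {A : Matrix ι ι 𝕜} {t : 𝕜} (hY : HasDerivAt Y (A * Y t) t) {e : Fin k → ι}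
    (he : StrictMono e)
    (hcross : ∀ p, ∀ l : Fin k → ι, StrictMono l → l ≠ e →
      (((1 : Matrix ι ι 𝕜).updateRow (e p) (A (e p))).submatrix e l).det *
        ((Y t).submatrix l e).det = 0) :
    HasDerivAt (fun s => ((Y s).submatrix e e).det)
      ((∑ p, (((1 : Matrix ι ι 𝕜).updateRow (e p) (A (e p))).submatrix e e).det) *
        ((Y t).submatrix e e).det) t := by
  refine (hasDerivAt_det_submatrix_eq_sum hY he.injective).congr_deriv ?_
  rw [sum_mul]
  exact sum_congr rfl fun p _ => sum_eq_single_of_mem e (by simpa using he)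
    fun l hl hne => hcross p l (by simpa using hl) hne

end Decomposability

theorem eq_mul_exp_integral_of_hasDerivAt_mul {u c : ℝ → ℝ} {a t : ℝ} (hc : Continuous c)
    (hu : ∀ s ∈ Set.Ici a, HasDerivAt u (c s * u s) s) (ht : a ≤ t) :
    u t = u a * Real.exp (∫ s in a..t, c s) := by
  set F : ℝ → ℝ := fun s => ∫ r in a..s, c r
  have hv : ∀ s ∈ Set.Ici a, HasDerivAt (fun s => u s * Real.exp (-F s)) 0 s := by
    intro s hs
    have hF : HasDerivAt F (c s) s := (hc.integral_hasStrictDerivAt a s).hasDerivAt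
    exact ((hu s hs).fun_mul hF.neg.exp).congr_deriv (by ring)
  have hconst := constant_of_has_deriv_right_zero
    (fun s hs => (hv s hs.1).continuousAt.continuousWithinAt)
    (fun s hs => (hv s hs.1).hasDerivWithinAt) t ⟨ht, le_rfl⟩
  simp only [F, intervalIntegral.integral_same, neg_zero, Real.exp_zero, mul_one] at hconst
  rw [← hconst, mul_assoc, ← Real.exp_add, neg_add_cancel, Real.exp_zero, mul_one]

theorem stmt17_general (m k : ℕ) (A Y : ℝ → Matrix (Fin (m + k)) (Fin (m + k)) ℝ)
    (hA : Continuous A) (hY0 : Y 0 = 1)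
    (hY : ∀ t ∈ Set.Ici (0 : ℝ), HasDerivAt Y (A t * Y t) t)
    (hvanish : ∀ t ∈ Set.Ici (0 : ℝ), ∀ p : Fin k,
      ∀ l : Fin k → Fin (m + k), StrictMono l → l ≠ Fin.natAdd m →
        ((((1 : Matrix (Fin (m + k)) (Fin (m + k)) ℝ).updateRow (Fin.natAdd m p)
              (A t (Fin.natAdd m p))).submatrix (Fin.natAdd m) l).det) *
          (((Y t).submatrix l (Fin.natAdd m)).det) = 0) :
    (∀ t ∈ Set.Ici (0 : ℝ),
      HasDerivAt (fun s => (((Y s).submatrix (Fin.natAdd m) (Fin.natAdd m)).det))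
        ((∑ p : Fin k,
            ((((1 : Matrix (Fin (m + k)) (Fin (m + k)) ℝ).updateRow (Fin.natAdd m p)
                (A t (Fin.natAdd m p))).submatrix (Fin.natAdd m) (Fin.natAdd m)).det)) *
          (((Y t).submatrix (Fin.natAdd m) (Fin.natAdd m)).det)) t) ∧
    ((Y 0).submatrix (Fin.natAdd m) (Fin.natAdd m)).det = 1 ∧
    (∀ t ∈ Set.Ici (0 : ℝ),
      0 < ((Y t).submatrix (Fin.natAdd m) (Fin.natAdd m)).det) := by
  have hderiv : ∀ t ∈ Set.Ici (0 : ℝ), HasDerivAt _ _ t := fun t ht =>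
    hasDerivAt_det_submatrix_of_cross_terms_eq_zero (hY t ht) (Fin.strictMono_natAdd m)
      (hvanish t ht)
  have hinit : ((Y 0).submatrix (Fin.natAdd m) (Fin.natAdd m)).det = 1 := by
    rw [hY0, submatrix_one _ (Fin.strictMono_natAdd m).injective, det_one]
  refine ⟨hderiv, hinit, fun t ht => ?_⟩
  have hc : Continuous fun t => ∑ p : Fin k,
      ((((1 : Matrix (Fin (m + k)) (Fin (m + k)) ℝ).updateRow (Fin.natAdd m p)
        (A t (Fin.natAdd m p))).submatrix (Fin.natAdd m) (Fin.natAdd m)).det) := by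
    fun_prop
  rw [eq_mul_exp_integral_of_hasDerivAt_mul hc hderiv ht, hinit, one_mul]
  exact Real.exp_pos _

/-- Sufficient condition for global decomposability (deterministic version): if
`Y' = A(t) Y`, `Y 0 = I`, each `Y t` is invertible, and all cross terms
`det^{last k}_{l}([I : A(t) : i]) · det^{l}_{last k}(Y t)` vanish for every increasing
index set `l ≠ (n-k+1,…,n)` and every row `i` among the last `k`, then the lower-right
`k×k` subdeterminant `u t = det^{last k}_{last k}(Y t)` solves the scalar linear ODE
`u' = c(t) u` with `c(t) = Σ_i det^{last k}_{last k}([I : A(t) : i])`, `u 0 = 1`, and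
in particular `u t > 0` for all `t ≥ 0`. -/
theorem stmt17 (m k : ℕ) (A Y : ℝ → Matrix (Fin (m + k)) (Fin (m + k)) ℝ)
    (hA : Continuous A) (hY0 : Y 0 = 1)
    (hY : ∀ t ∈ Set.Ici (0 : ℝ), HasDerivAt Y (A t * Y t) t)
    (hinv : ∀ t ∈ Set.Ici (0 : ℝ), IsUnit (Y t).det)
    (hvanish : ∀ t ∈ Set.Ici (0 : ℝ), ∀ p : Fin k,
      ∀ l : Fin k → Fin (m + k), StrictMono l → l ≠ Fin.natAdd m →
        ((((1 : Matrix (Fin (m + k)) (Fin (m + k)) ℝ).updateRow (Fin.natAdd m p)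
              (A t (Fin.natAdd m p))).submatrix (Fin.natAdd m) l).det) *
          (((Y t).submatrix l (Fin.natAdd m)).det) = 0) :
    (∀ t ∈ Set.Ici (0 : ℝ),
      HasDerivAt (fun s => (((Y s).submatrix (Fin.natAdd m) (Fin.natAdd m)).det))
        ((∑ p : Fin k,
            ((((1 : Matrix (Fin (m + k)) (Fin (m + k)) ℝ).updateRow (Fin.natAdd m p)
                (A t (Fin.natAdd m p))).submatrix (Fin.natAdd m) (Fin.natAdd m)).det)) *
          (((Y t).submatrix (Fin.natAdd m) (Fin.natAdd m)).det)) t) ∧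
    ((Y 0).submatrix (Fin.natAdd m) (Fin.natAdd m)).det = 1 ∧
    (∀ t ∈ Set.Ici (0 : ℝ),
      0 < ((Y t).submatrix (Fin.natAdd m) (Fin.natAdd m)).det) :=
  stmt17_general m k A Y hA hY0 hY hvanish
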